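/- Let p ≥ 1 and let a, b be precision-p binary floating-point numbers with |a| ≥ |b|, let RN be a round-to-nearest function for precision p, and set x = RN(a + b). Then b − (x − a) is a precision-p binary floating-point number, and consequently y := RN(b − RN(x − a)) equals the exact rounding error a + b − x. -/
import Mathlib

/-- A precision-`p` binary floating-point number (unbounded exponent):
a real of the form `m * 2 ^ e` with `m e : ℤ` and `|m| < 2 ^ p`. -/
def FloatRep (p : ℕ) (x : ℝ) : Prop :=
  ∃ m e : ℤ, |m| < 2 ^ p ∧ x = (m : ℝ) * (2 : ℝ) ^ e

/-- `RN` is a round-to-nearest function for precision `p`: `RN x` is a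
precision-`p` float and is at least as close to `x` as any precision-`p`
float (ties broken arbitrarily). -/
def IsRoundNearest (p : ℕ) (RN : ℝ → ℝ) : Prop :=
  ∀ x : ℝ, FloatRep p (RN x) ∧ ∀ f : ℝ, FloatRep p f → |RN x - x| ≤ |f - x|

/-- For nonzero `x`, `ulp x = 2 ^ (⌊log₂ |x|⌋ - p + 1)`. -/
noncomputable def ulp (p : ℕ) (x : ℝ) : ℝ :=
  (2 : ℝ) ^ (Int.log 2 |x| - (p : ℤ) + 1)

/- ### Auxiliary lemmas -/

lemma two_zpow_pos' (e : ℤ) : (0:ℝ) < 2 ^ e := by positivity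

lemma two_zpow_add (m n : ℤ) : (2:ℝ) ^ (m + n) = 2 ^ m * 2 ^ n :=
  zpow_add₀ two_ne_zero m n

lemma log2_zpow (z : ℤ) : Int.log 2 ((2:ℝ) ^ z) = z := by
  exact_mod_cast Int.log_zpow (R := ℝ) (b := 2) (by norm_num) z

lemma zpow_log2_le {r : ℝ} (hr : 0 < r) : (2:ℝ) ^ Int.log 2 r ≤ r := by
  exact_mod_cast Int.zpow_log_le_self (b := 2) (by norm_num) hr

lemma lt_zpow_log2_succ (r : ℝ) : r < (2:ℝ) ^ (Int.log 2 r + 1) := by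
  exact_mod_cast Int.lt_zpow_succ_log_self (b := 2) (by norm_num) r

/-- `t` is an integer multiple of `2^e`. -/
def IsMul (e : ℤ) (t : ℝ) : Prop := ∃ k : ℤ, t = (k : ℝ) * (2:ℝ) ^ e

lemma isMul_mono {e e' : ℤ} (h : e' ≤ e) {t : ℝ} : IsMul e t → IsMul e' t := by
  rintro ⟨k, rfl⟩
  refine ⟨k * 2 ^ (e - e').toNat, ?_⟩
  push_cast
  rw [mul_assoc, ← zpow_natCast (2:ℝ), ← zpow_add₀ (two_ne_zero), Int.toNat_of_nonneg (by omega)]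
  congr 2
  omega

lemma isMul_sub {e : ℤ} {s t : ℝ} (hs : IsMul e s) (ht : IsMul e t) : IsMul e (s - t) := by
  obtain ⟨k, rfl⟩ := hs; obtain ⟨l, rfl⟩ := ht
  exact ⟨k - l, by push_cast; ring⟩

lemma isMul_add {e : ℤ} {s t : ℝ} (hs : IsMul e s) (ht : IsMul e t) : IsMul e (s + t) := by
  obtain ⟨k, rfl⟩ := hs; obtain ⟨l, rfl⟩ := ht
  exact ⟨k + l, by push_cast; ring⟩

lemma floatRep_zero (p : ℕ) : FloatRep p 0 :=
  ⟨0, 0, by simpa using pow_pos (by norm_num : (0:ℤ) < 2) p, by simp⟩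

lemma floatRep_neg {p : ℕ} {f : ℝ} (hf : FloatRep p f) : FloatRep p (-f) := by
  obtain ⟨m, e, hm, rfl⟩ := hf
  exact ⟨-m, e, by simpa using hm, by push_cast; ring⟩

lemma one_lt_two_pow_int {p : ℕ} (hp : 1 ≤ p) : (1:ℤ) < 2 ^ p := by
  calc (1:ℤ) < 2 ^ 1 := by norm_num
  _ ≤ 2 ^ p := pow_le_pow_right₀ one_le_two hp

lemma floatRep_two_zpow {p : ℕ} (hp : 1 ≤ p) (e : ℤ) : FloatRep p ((2:ℝ) ^ e) :=
  ⟨1, e, by simpa using one_lt_two_pow_int hp, by norm_num⟩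

lemma rn_fix {p : ℕ} {RN : ℝ → ℝ} (hRN : IsRoundNearest p RN) {f : ℝ}
    (hf : FloatRep p f) : RN f = f := by
  have h := (hRN f).2 f hf
  simp only [sub_self, abs_zero] at h
  have h0 : |RN f - f| = 0 := le_antisymm h (abs_nonneg _)
  have := abs_eq_zero.mp h0
  linarith

lemma float_of_isMul_le {p : ℕ} (hp : 1 ≤ p) {e : ℤ} {t : ℝ} (h : IsMul e t)
    (ht : |t| ≤ (2:ℝ) ^ ((p:ℤ) + e)) : FloatRep p t := by
  obtain ⟨k, rfl⟩ := h
  have he : (0:ℝ) < 2 ^ e := two_zpow_pos' e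
  have hk : |(k:ℝ)| ≤ 2 ^ (p:ℤ) := by
    rw [abs_mul, abs_of_pos he, two_zpow_add] at ht
    exact le_of_mul_le_mul_right ht he
  have hkZ : |k| ≤ 2 ^ p := by
    have : ((|k| : ℤ) : ℝ) ≤ ((2 ^ p : ℤ) : ℝ) := by push_cast [← zpow_natCast (2:ℝ)]; exact_mod_cast hk
    exact_mod_cast this
  rcases lt_or_eq_of_le hkZ with hlt | heq
  · exact ⟨k, e, hlt, rfl⟩
  · rcases abs_eq (a := k) (by positivity) |>.mp heq with h1 | h1
    · refine ⟨1, (p:ℤ) + e, one_lt_two_pow_int hp, ?_⟩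
      rw [h1, two_zpow_add]
      push_cast [← zpow_natCast (2:ℝ)]
      ring
    · refine ⟨-1, (p:ℤ) + e, by simpa using one_lt_two_pow_int hp, ?_⟩
      rw [h1, two_zpow_add]
      push_cast [← zpow_natCast (2:ℝ)]
      ring

lemma isMul_of_float {p : ℕ} {f : ℝ} (hf : FloatRep p f) (h0 : f ≠ 0) :
    IsMul (Int.log 2 |f| - p + 1) f := by
  obtain ⟨m, e, hm, rfl⟩ := hf
  set E := Int.log 2 |(m:ℝ) * 2 ^ e| with hE
  have hpos : (0:ℝ) < |(m:ℝ) * 2 ^ e| := abs_pos.2 h0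
  have h1 : (2:ℝ) ^ E ≤ |(m:ℝ) * 2 ^ e| := zpow_log2_le hpos
  have hmr : |(m:ℝ)| < 2 ^ (p:ℤ) := by
    rw [zpow_natCast]
    exact_mod_cast hm
  have h2 : |(m:ℝ) * 2 ^ e| < 2 ^ ((p:ℤ) + e) := by
    rw [abs_mul, abs_of_pos (two_zpow_pos' e), two_zpow_add]
    exact mul_lt_mul_of_pos_right hmr (two_zpow_pos' e)
  have hEe : E - p + 1 ≤ e := by
    have := (zpow_lt_zpow_iff_right₀ (by norm_num : (1:ℝ) < 2)).mp (lt_of_le_of_lt h1 h2)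
    omega
  exact isMul_mono hEe ⟨m, rfl⟩

/-- In Fast2Sum, `b - (x - a)` is a precision-`p` float, and consequently
`y = RN (b - RN (x - a))` equals the exact rounding error `a + b - x`. -/
theorem fast2sum_error_exact (p : ℕ) (hp : 1 ≤ p) (RN : ℝ → ℝ)
    (hRN : IsRoundNearest p RN) (a b : ℝ)
    (ha : FloatRep p a) (hb : FloatRep p b) (hab : |b| ≤ |a|)
    (x : ℝ) (hx : x = RN (a + b)) :
    FloatRep p (b - (x - a)) ∧ RN (b - RN (x - a)) = a + b - x := by
  suffices key : FloatRep p (x - a) ∧ FloatRep p (a + b - x) by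
    obtain ⟨h1, h2⟩ := key
    have e1 : RN (x - a) = x - a := rn_fix hRN h1
    have e2 : b - (x - a) = a + b - x := by ring
    exact ⟨e2 ▸ h2, by rw [e1, e2, rn_fix hRN h2]⟩
  by_cases hsF : FloatRep p (a + b)
  · have hxs : x = a + b := by rw [hx, rn_fix hRN hsF]
    rw [hxs]
    constructor
    · have : a + b - a = b := by ring
      rw [this]; exact hb
    · have : a + b - (a + b) = 0 := by ring
      rw [this]; exact floatRep_zero p
  -- main case: a + b is not a float
  have hb0 : b ≠ 0 := by
    rintro rfl
    exact hsF (by simpa using ha)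
  have ha0 : a ≠ 0 := by
    intro h
    rw [h, abs_zero] at hab
    exact hb0 (abs_eq_zero.mp (le_antisymm hab (abs_nonneg b)))
  have hs0 : a + b ≠ 0 := fun h => hsF (h ▸ floatRep_zero p)
  set Eb := Int.log 2 |b| with hEbdef
  set Ea := Int.log 2 |a| with hEadef
  set e0 : ℤ := Eb - p + 1 with he0def
  have hpe : (p:ℤ) + e0 = Eb + 1 := by omega
  have hEab : Eb ≤ Ea := Int.log_mono_right (abs_pos.2 hb0) hab
  have hbq : IsMul e0 b := isMul_of_float hb hb0
  have haq : IsMul e0 a := isMul_mono (by omega) (isMul_of_float ha ha0)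
  have hsq : IsMul e0 (a + b) := isMul_add haq hbq
  have hbE' : |b| < 2 ^ (Eb + 1) := lt_zpow_log2_succ |b|
  have hs_big : (2:ℝ) ^ (Eb + 1) ≤ |a + b| := by
    by_contra hlt
    push_neg at hlt
    exact hsF (float_of_isMul_le hp hsq (by rw [hpe]; linarith))
  -- |x - (a+b)| ≤ |b|
  have hδb : |x - (a + b)| ≤ |b| := by
    have h := (hRN (a + b)).2 a ha
    have e : a - (a + b) = -b := by ring
    rw [e, abs_neg] at h
    rw [hx]; exact h
  -- 2^(Eb+1) ≤ |x|
  have hx_big : (2:ℝ) ^ (Eb + 1) ≤ |x| := by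
    rcases lt_or_gt_of_ne hs0 with hsneg | hspos
    · -- a + b < 0
      have h2 : a + b ≤ -2 ^ (Eb + 1) := by
        rw [abs_of_neg hsneg] at hs_big; linarith
      have hc := (hRN (a + b)).2 (-2 ^ (Eb + 1)) (floatRep_neg (floatRep_two_zpow hp _))
      rw [← hx] at hc
      have e : |(-2 ^ (Eb + 1) : ℝ) - (a + b)| = -2 ^ (Eb + 1) - (a + b) := by
        rw [abs_of_nonneg]; linarith
      rw [e] at hc
      have hxub : x ≤ -2 ^ (Eb + 1) := by
        have := (abs_le.mp hc).2
        linarith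
      have : (2:ℝ) ^ (Eb + 1) ≤ -x := by linarith
      calc (2:ℝ) ^ (Eb + 1) ≤ -x := this
      _ ≤ |x| := neg_le_abs x
    · -- a + b > 0
      have h2 : (2:ℝ) ^ (Eb + 1) ≤ a + b := by
        rw [abs_of_pos hspos] at hs_big; linarith
      have hc := (hRN (a + b)).2 (2 ^ (Eb + 1)) (floatRep_two_zpow hp _)
      rw [← hx] at hc
      have e : |(2 ^ (Eb + 1) : ℝ) - (a + b)| = (a + b) - 2 ^ (Eb + 1) := by
        rw [abs_sub_comm, abs_of_nonneg]; linarith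
      rw [e] at hc
      have hxlb : (2:ℝ) ^ (Eb + 1) ≤ x := by
        have := (abs_le.mp hc).1
        linarith
      exact hxlb.trans (le_abs_self x)
  have hx0 : x ≠ 0 := by
    intro h
    rw [h, abs_zero] at hx_big
    exact absurd hx_big (not_le.mpr (two_zpow_pos' (Eb + 1)))
  have hEx : Eb + 1 ≤ Int.log 2 |x| := by
    have := Int.log_mono_right (b := 2) (two_zpow_pos' (Eb + 1)) hx_big
    rwa [log2_zpow] at this
  have hxF : FloatRep p x := hx ▸ (hRN (a + b)).1
  have hxq : IsMul (e0 + 1) x := isMul_mono (by omega) (isMul_of_float hxF hx0)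
  -- second conjunct: a + b - x is a float
  have h2 : FloatRep p (a + b - x) := by
    refine float_of_isMul_le hp (isMul_sub hsq (isMul_mono (by omega) hxq)) ?_
    rw [hpe, abs_sub_comm]
    linarith
  refine ⟨?_, h2⟩
  -- first conjunct: x - a is a float
  rcases hEab.lt_or_eq with hlt | heq
  · -- Eb < Ea : a is a multiple of 2^(e0+1)
    have haq2 : IsMul (e0 + 1) a := isMul_mono (by omega) (isMul_of_float ha ha0)
    refine float_of_isMul_le hp (isMul_sub hxq haq2) ?_
    have hxa : |x - a| ≤ |x - (a + b)| + |b| := by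
      have e : x - a = (x - (a + b)) + b := by ring
      rw [e]; exact abs_add_le _ _
    have hb2 : (2:ℝ) * |b| < 2 ^ ((p:ℤ) + (e0 + 1)) := by
      have : (p:ℤ) + (e0 + 1) = (Eb + 1) + 1 := by omega
      rw [this, two_zpow_add]
      have : (2:ℝ) ^ (1:ℤ) = 2 := by norm_num
      rw [this]
      linarith
    linarith
  · -- Ea = Eb
    have haE' : |a| < 2 ^ (Eb + 1) := by
      have := lt_zpow_log2_succ |a|
      rwa [← hEadef, ← heq] at this
    -- the rounding error is at most 2^e0
    set n : ℤ := round ((a + b) / 2 ^ (e0 + 1)) with hndef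
    have hq2 : (0:ℝ) < 2 ^ (e0 + 1) := two_zpow_pos' _
    have hfs : |(n:ℝ) * 2 ^ (e0 + 1) - (a + b)| ≤ 2 ^ e0 := by
      have h1 : (n:ℝ) * 2 ^ (e0 + 1) - (a + b)
          = ((n:ℝ) - (a + b) / 2 ^ (e0 + 1)) * 2 ^ (e0 + 1) := by
        field_simp
      have h2 : |(a + b) / 2 ^ (e0 + 1) - (n:ℝ)| ≤ 1 / 2 := abs_sub_round _
      have h3 : (2:ℝ) ^ (e0 + 1) = 2 ^ e0 * 2 := by
        rw [two_zpow_add]; norm_num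
      rw [h1, abs_mul, abs_of_pos hq2, abs_sub_comm]
      calc |(a + b) / 2 ^ (e0 + 1) - (n:ℝ)| * 2 ^ (e0 + 1)
          ≤ (1 / 2) * 2 ^ (e0 + 1) := by
            exact mul_le_mul_of_nonneg_right h2 (le_of_lt hq2)
      _ = 2 ^ e0 := by rw [h3]; ring
    have habs : |a + b| < 2 ^ ((p:ℤ) + (e0 + 1)) := by
      have e : (p:ℤ) + (e0 + 1) = (Eb + 1) + 1 := by omega
      rw [e, two_zpow_add]
      have e2 : (2:ℝ) ^ (1:ℤ) = 2 := by norm_num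
      rw [e2]
      calc |a + b| ≤ |a| + |b| := abs_add_le a b
      _ < 2 ^ (Eb + 1) + 2 ^ (Eb + 1) := by linarith
      _ = 2 ^ (Eb + 1) * 2 := by ring
    have hn_le : |(n:ℝ)| ≤ 2 ^ (p:ℤ) := by
      have h4 : |(n:ℝ)| ≤ |(n:ℝ) - (a + b) / 2 ^ (e0 + 1)| + |(a + b) / 2 ^ (e0 + 1)| := by
        have e : (n:ℝ) = ((n:ℝ) - (a + b) / 2 ^ (e0 + 1)) + (a + b) / 2 ^ (e0 + 1) := by ring
        nth_rewrite 1 [e]; exact abs_add_le _ _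
      have h5 : |(n:ℝ) - (a + b) / 2 ^ (e0 + 1)| ≤ 1 / 2 := by
        rw [abs_sub_comm]; exact abs_sub_round _
      have h6 : |(a + b) / 2 ^ (e0 + 1)| < 2 ^ (p:ℤ) := by
        rw [abs_div, abs_of_pos hq2, div_lt_iff₀ hq2, ← two_zpow_add]
        exact habs
      have h7 : |(n:ℝ)| < 2 ^ (p:ℤ) + 1 / 2 := by linarith
      -- integrality: |n| < 2^p + 1
      have h8 : |n| < 2 ^ p + 1 := by
        have : ((|n| : ℤ) : ℝ) < ((2 ^ p + 1 : ℤ) : ℝ) := by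
          push_cast [← zpow_natCast (2:ℝ)]
          calc |(n:ℝ)| < 2 ^ (p:ℤ) + 1 / 2 := h7
          _ < 2 ^ (p:ℤ) + 1 := by norm_num
        exact_mod_cast this
      have h9 : |n| ≤ 2 ^ p := by omega
      have : ((|n| : ℤ) : ℝ) ≤ ((2 ^ p : ℤ) : ℝ) := by exact_mod_cast h9
      push_cast [← zpow_natCast (2:ℝ)] at this
      exact this
    have hfF : FloatRep p ((n:ℝ) * 2 ^ (e0 + 1)) := by
      refine float_of_isMul_le hp ⟨n, rfl⟩ ?_
      rw [abs_mul, abs_of_pos hq2, two_zpow_add (p:ℤ) (e0 + 1)]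
      exact mul_le_mul_of_nonneg_right hn_le (le_of_lt hq2)
    have hδ : |x - (a + b)| ≤ 2 ^ e0 := by
      have hc := (hRN (a + b)).2 ((n:ℝ) * 2 ^ (e0 + 1)) hfF
      rw [← hx] at hc
      exact hc.trans hfs
    -- |b| ≤ 2^(p+e0) - 2^e0
    have hb' : |b| ≤ 2 ^ ((p:ℤ) + e0) - 2 ^ e0 := by
      obtain ⟨kb, hkb⟩ := hbq
      have he0 : (0:ℝ) < 2 ^ e0 := two_zpow_pos' e0
      have hkbr : |(kb:ℝ)| < 2 ^ (p:ℤ) := by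
        have h10 : |(kb:ℝ) * 2 ^ e0| < 2 ^ ((p:ℤ) + e0) := by
          rw [← hkb, hpe]; exact hbE'
        rw [abs_mul, abs_of_pos he0, two_zpow_add (p:ℤ) e0] at h10
        exact lt_of_mul_lt_mul_right h10 (le_of_lt he0)
      have hkbZ : |kb| ≤ 2 ^ p - 1 := by
        have : |kb| < 2 ^ p := by
          have : ((|kb| : ℤ) : ℝ) < ((2 ^ p : ℤ) : ℝ) := by
            push_cast [← zpow_natCast (2:ℝ)]; exact hkbr
          exact_mod_cast this
        omega
      have : |(kb:ℝ)| ≤ 2 ^ (p:ℤ) - 1 := by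
        have : ((|kb| : ℤ) : ℝ) ≤ ((2 ^ p - 1 : ℤ) : ℝ) := by exact_mod_cast hkbZ
        push_cast [← zpow_natCast (2:ℝ)] at this
        exact this
      calc |b| = |(kb:ℝ)| * 2 ^ e0 := by rw [hkb, abs_mul, abs_of_pos he0]
      _ ≤ (2 ^ (p:ℤ) - 1) * 2 ^ e0 := mul_le_mul_of_nonneg_right this (le_of_lt he0)
      _ = 2 ^ ((p:ℤ) + e0) - 2 ^ e0 := by rw [two_zpow_add (p:ℤ) e0, sub_one_mul]
    have hxaq : IsMul e0 (x - a) := isMul_sub (isMul_mono (by omega) hxq) haq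
    refine float_of_isMul_le hp hxaq ?_
    have hxa : |x - a| ≤ |x - (a + b)| + |b| := by
      have e : x - a = (x - (a + b)) + b := by ring
      rw [e]; exact abs_add_le _ _
    linarith
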